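/- arXiv:1610.03479 — 3 statements merged into one kernel-verified Lean document; each statement's English description precedes it below -/
import Mathlib

section
/- For all ξ, η ∈ ℝ² with ξ, η, ξ−η nonzero, the gradient of the phase Φ(ξ,η) = ξ₁/|ξ|² − (ξ₁−η₁)/|ξ−η|² − η₁/|η|² with respect to η satisfies |∇_η Φ(ξ,η)| = |ξ| |ξ−2η| / (|ξ−η|² |η|²). -/
/-!
Identify `ℝ²` with `ℂ`. Then `θ₁ / |θ|² = Re (1 / θ)`, and the gradient of the real part of a
holomorphic function `f` is `conj f'`, so the gradient of `θ ↦ θ₁ / |θ|²` at `p` is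
`conj (-1 / p²)`. Since `Φ(ξ, η) = Re (1/ξ) - Re (1/(ξ - η)) - Re (1/η)`, this gives
`∇_η Φ(ξ, η) = conj (1 / η² - 1 / (ξ - η)²)`, whose modulus is
`|η² - (ξ - η)²| / (|ξ - η|² |η|²) = |ξ| |ξ - 2η| / (|ξ - η|² |η|²)`.
-/

noncomputable def Phi (ξ η : EuclideanSpace ℝ (Fin 2)) : ℝ :=
  ξ 0 / ‖ξ‖ ^ 2 - (ξ 0 - η 0) / ‖ξ - η‖ ^ 2 - η 0 / ‖η‖ ^ 2

open scoped RealInnerProductSpace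

theorem hasGradientAt_inner_div_norm_sq {F : Type*} [NormedAddCommGroup F]
    [InnerProductSpace ℝ F] [CompleteSpace F] (a : F) {p : F} (hp : p ≠ 0) :
    HasGradientAt (fun x => ⟪a, x⟫ / ‖x‖ ^ 2)
      ((‖p‖ ^ 2)⁻¹ • a - (2 * ⟪a, p⟫ / ‖p‖ ^ 4) • p) p := by
  have hp2 : ‖p‖ ^ 2 ≠ 0 := by positivity
  have hinv : HasFDerivAt (fun x : F => (‖x‖ ^ 2)⁻¹)
      (-((‖p‖ ^ 2) ^ 2)⁻¹ • 2 • innerSL ℝ p) p :=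
    (hasDerivAt_inv hp2).comp_hasFDerivAt p (hasStrictFDerivAt_norm_sq p).hasFDerivAt
  rw [hasGradientAt_iff_hasFDerivAt]
  refine ((innerSL ℝ a).hasFDerivAt.mul hinv).congr_fderiv ?_
  ext u
  simp only [InnerProductSpace.toDual_apply_apply, inner_sub_left, real_inner_smul_left,
    add_apply, smul_apply, nsmul_eq_mul, innerSL_apply_apply, smul_eq_mul]
  ring

local notation "E²" => EuclideanSpace ℝ (Fin 2)

noncomputable def reInv (θ : E²) : ℝ := θ 0 / ‖θ‖ ^ 2

noncomputable def gradReInv (p : E²) : E² :=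
  (‖p‖ ^ 2)⁻¹ • EuclideanSpace.single 0 1 - (2 * p 0 / ‖p‖ ^ 4) • p

theorem hasGradientAt_reInv {p : E²} (hp : p ≠ 0) : HasGradientAt reInv (gradReInv p) p := by
  have h := hasGradientAt_inner_div_norm_sq (EuclideanSpace.single (0 : Fin 2) (1 : ℝ)) hp
  simp only [EuclideanSpace.inner_single_left, map_one, one_mul] at h
  exact h

theorem hasGradientAt_Phi {ξ η : E²} (hη : η ≠ 0) (hξη : ξ - η ≠ 0) :
    HasGradientAt (Phi ξ) (gradReInv (ξ - η) - gradReInv η) η := by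
  have hsub : HasFDerivAt (fun θ : E² => ξ - θ) (-ContinuousLinearMap.id ℝ E²) η := by
    simpa using (hasFDerivAt_id (𝕜 := ℝ) η).const_sub ξ
  have h := ((hasFDerivAt_const (reInv ξ) η).sub
    ((hasGradientAt_reInv hξη).hasFDerivAt.comp η hsub)).sub (hasGradientAt_reInv hη).hasFDerivAt
  rw [hasGradientAt_iff_hasFDerivAt]
  refine h.congr_fderiv ?_
  ext u
  simp

theorem norm_sq_eq_fin_two (x : E²) : ‖x‖ ^ 2 = x 0 ^ 2 + x 1 ^ 2 := by
  simp [EuclideanSpace.real_norm_sq_eq, Fin.sum_univ_two]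

theorem norm_gradReInv_sub {u v : E²} (hu : u ≠ 0) (hv : v ≠ 0) :
    ‖gradReInv u - gradReInv v‖ = ‖u + v‖ * ‖u - v‖ / (‖u‖ ^ 2 * ‖v‖ ^ 2) := by
  have hu2 : u 0 ^ 2 + u 1 ^ 2 ≠ 0 := by rw [← norm_sq_eq_fin_two]; positivity
  have hv2 : v 0 ^ 2 + v 1 ^ 2 ≠ 0 := by rw [← norm_sq_eq_fin_two]; positivity
  rw [← sq_eq_sq₀ (norm_nonneg _) (by positivity), div_pow, mul_pow, mul_pow]
  simp only [norm_sq_eq_fin_two, gradReInv, show ‖u‖ ^ 4 = (‖u‖ ^ 2) ^ 2 by ring,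
    show ‖v‖ ^ 4 = (‖v‖ ^ 2) ^ 2 by ring, PiLp.sub_apply, PiLp.smul_apply, PiLp.add_apply,
    PiLp.single_eq_same, ne_eq, one_ne_zero, not_false_eq_true, PiLp.single_eq_of_ne,
    smul_eq_mul, mul_one, mul_zero, zero_sub]
  field_simp
  ring

theorem norm_grad_eta_Phi_general (ξ η : EuclideanSpace ℝ (Fin 2))
    (hη : η ≠ 0) (hξη : ξ - η ≠ 0) :
    ‖gradient (fun θ => Phi ξ θ) η‖ =
      ‖ξ‖ * ‖ξ - (2 : ℝ) • η‖ / (‖ξ - η‖ ^ 2 * ‖η‖ ^ 2) := by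
  rw [(hasGradientAt_Phi hη hξη).gradient, norm_gradReInv_sub hξη hη, sub_add_cancel,
    sub_sub, two_smul]

theorem norm_grad_eta_Phi (ξ η : EuclideanSpace ℝ (Fin 2))
    (hξ : ξ ≠ 0) (hη : η ≠ 0) (hξη : ξ - η ≠ 0) :
    ‖gradient (fun θ => Phi ξ θ) η‖ =
      ‖ξ‖ * ‖ξ - (2 : ℝ) • η‖ / (‖ξ - η‖ ^ 2 * ‖η‖ ^ 2) :=
  norm_grad_eta_Phi_general ξ η hη hξη
end

section
/- For all ξ, η ∈ ℝ² with ξ, η, ξ−η nonzero, the gradient of the phase Φ(ξ,η) = ξ₁/|ξ|² − (ξ₁−η₁)/|ξ−η|² − η₁/|η|² with respect to ξ satisfies |∇_ξ Φ(ξ,η)| = |η| |η−2ξ| / (|ξ−η|² |ξ|²). -/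
/-!
Identify `ℝ²` isometrically with `ℂ`, writing `z, w` for `ξ, η`, so that `ξ₁ / |ξ|² = Re (1 / z)`.
Then `Φ(·, η)` is the real part of the holomorphic function `z ↦ 1/z - 1/(z - w) - 1/w`, and the
real gradient of the real part of a holomorphic function is the conjugate of its complex derivative,
here `1/(z - w)² - 1/z²`. Hence `|∇_ξ Φ| = |z² - (z - w)²| / (|z - w|² |z|²)`, and
`z² - (z - w)² = w (2z - w)`.
-/

open Complex ComplexConjugate

theorem HasGradientAt.comp_linearIsometryEquiv {𝕜 F G : Type*} [RCLike 𝕜]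
    [NormedAddCommGroup F] [InnerProductSpace 𝕜 F] [CompleteSpace F]
    [NormedAddCommGroup G] [InnerProductSpace 𝕜 G] [CompleteSpace G]
    {f : G → 𝕜} {g : G} (T : F ≃ₗᵢ[𝕜] G) {x : F} (hf : HasGradientAt f g (T x)) :
    HasGradientAt (f ∘ T) (T.symm g) x := by
  rw [hasGradientAt_iff_hasFDerivAt] at hf ⊢
  refine (hf.comp x T.toContinuousLinearEquiv.hasFDerivAt).congr_fderiv ?_
  ext v
  simp [← T.inner_map_map]

theorem HasDerivAt.hasGradientAt_re {h : ℂ → ℂ} {c z : ℂ} (hh : HasDerivAt h c z) :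
    HasGradientAt (fun u => (h u).re) (conj c) z := by
  rw [hasGradientAt_iff_hasFDerivAt]
  refine (reCLM.hasFDerivAt.comp z (hh.hasFDerivAt.restrictScalars ℝ)).congr_fderiv ?_
  ext v
  simp [Complex.inner]

noncomputable def complexPhase (w z : ℂ) : ℂ :=
  z⁻¹ - (z - w)⁻¹ - w⁻¹

theorem hasDerivAt_complexPhase {z w : ℂ} (hz : z ≠ 0) (hzw : z - w ≠ 0) :
    HasDerivAt (complexPhase w) (((z - w) ^ 2)⁻¹ - (z ^ 2)⁻¹) z := by
  have hinv := (hasDerivAt_id' z).inv hz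
  have hinv_sub := ((hasDerivAt_id' z).sub_const w).inv hzw
  exact ((hinv.sub hinv_sub).sub_const w⁻¹).congr_deriv (by ring)

theorem norm_inv_sq_sub_inv_sq {z w : ℂ} (hz : z ≠ 0) (hzw : z - w ≠ 0) :
    ‖((z - w) ^ 2)⁻¹ - (z ^ 2)⁻¹‖ = ‖w‖ * ‖w - 2 * z‖ / (‖z - w‖ ^ 2 * ‖z‖ ^ 2) := by
  have hdiff : ((z - w) ^ 2)⁻¹ - (z ^ 2)⁻¹ = w * (2 * z - w) / ((z - w) ^ 2 * z ^ 2) := by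
    field_simp
    ring
  rw [hdiff, norm_div, norm_mul, norm_mul, norm_pow, norm_pow, norm_sub_rev (2 * z)]

theorem re_inv_orthonormalBasisOneI_repr_symm (x : EuclideanSpace ℝ (Fin 2)) :
    (orthonormalBasisOneI.repr.symm x)⁻¹.re = x 0 / ‖x‖ ^ 2 := by
  rw [inv_re, normSq_eq_norm_sq, LinearIsometryEquiv.norm_map]
  simp

theorem Phi_eq_re_complexPhase (η : EuclideanSpace ℝ (Fin 2)) :
    (fun θ => Phi θ η) =
      (fun z => (complexPhase (orthonormalBasisOneI.repr.symm η) z).re) ∘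
        orthonormalBasisOneI.repr.symm := by
  ext θ
  simp only [Phi, complexPhase, Function.comp_apply, sub_re, ← map_sub,
    re_inv_orthonormalBasisOneI_repr_symm, PiLp.sub_apply]

theorem norm_grad_xi_Phi_general (ξ η : EuclideanSpace ℝ (Fin 2))
    (hξ : ξ ≠ 0) (hξη : ξ - η ≠ 0) :
    ‖gradient (fun θ => Phi θ η) ξ‖ =
      ‖η‖ * ‖η - (2 : ℝ) • ξ‖ / (‖ξ - η‖ ^ 2 * ‖ξ‖ ^ 2) := by
  set T := orthonormalBasisOneI.repr.symm
  have hz : T ξ ≠ 0 := by simpa using hξ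
  have hzw : T ξ - T η ≠ 0 := by simpa [sub_eq_zero] using hξη
  have hgrad := (hasDerivAt_complexPhase hz hzw).hasGradientAt_re.comp_linearIsometryEquiv T
  rw [Phi_eq_re_complexPhase, hgrad.gradient, LinearIsometryEquiv.norm_map, norm_conj,
    norm_inv_sq_sub_inv_sq hz hzw, ← ofReal_ofNat, ← real_smul, ← map_smul, ← map_sub, ← map_sub]
  simp only [LinearIsometryEquiv.norm_map]

theorem norm_grad_xi_Phi (ξ η : EuclideanSpace ℝ (Fin 2))
    (hξ : ξ ≠ 0) (hη : η ≠ 0) (hξη : ξ - η ≠ 0) :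
    ‖gradient (fun θ => Phi θ η) ξ‖ =
      ‖η‖ * ‖η - (2 : ℝ) • ξ‖ / (‖ξ - η‖ ^ 2 * ‖ξ‖ ^ 2) :=
  norm_grad_xi_Phi_general ξ η hξ hξη
end

section
/- Let ξ, η ∈ ℝ² with η ≠ 0 and ξ−η ≠ 0. Characterization of the space-resonant set: ∇_η Φ(ξ,η) = 0 if and only if ξ = 0 or ξ = 2η, where Φ(ξ,η) = ξ₁/|ξ|² − (ξ₁−η₁)/|ξ−η|² − η₁/|η|² (for the purposes of this statement one may replace Φ by Φ̃(ξ,η) = −(ξ₁−η₁)/|ξ−η|² − η₁/|η|², which has the same η-gradient; if additionally ξ ≠ 0 assume all three points ξ, η, ξ−η nonzero). -/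
/-!
Write `k θ = θ₁ / |θ|²` and `g = ∇k`, so that `Φ̃(ξ, ·) = -k (ξ - ·) - k` has gradient
`g (ξ - η) - g η` at `η`. In complex notation `g z = -1 / z̄²`, hence `g x = g y` iff `x = ±y`,
and the two cases `ξ - η = η`, `ξ - η = -η` are `ξ = 2η`, `ξ = 0`. Without complex numbers:
`|g x| = 1 / |x|²` gives `|x| = |y|`, after which `g x = g y` reduces to `x₁ x = y₁ y`, and
together with `|x| = |y|` this says `z² = w²` for the complex numbers `z, w` of `x, y`.
-/

open InnerProductSpace RealInnerProductSpace

section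
variable {E : Type*} [NormedAddCommGroup E] [InnerProductSpace ℝ E]

/-- `‖x‖⁻²` times the reflection of `e` in the hyperplane `x^⊥`. -/
noncomputable def gradInnerDivNormSq (e x : E) : E :=
  (‖x‖ ^ 2)⁻¹ • e - (2 * ⟪e, x⟫ / ‖x‖ ^ 4) • x

theorem gradInnerDivNormSq_neg (e x : E) :
    gradInnerDivNormSq e (-x) = gradInnerDivNormSq e x := by
  simp [gradInnerDivNormSq, neg_div, sub_eq_add_neg]

theorem norm_gradInnerDivNormSq (e x : E) :
    ‖gradInnerDivNormSq e x‖ = ‖e‖ / ‖x‖ ^ 2 := by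
  rcases eq_or_ne x 0 with rfl | hx
  · simp [gradInnerDivNormSq]
  have hx : ‖x‖ ≠ 0 := norm_ne_zero_iff.2 hx
  rw [← sq_eq_sq₀ (norm_nonneg _) (by positivity), gradInnerDivNormSq, norm_sub_sq_real,
    norm_smul, norm_smul, real_inner_smul_left, real_inner_smul_right]
  simp only [Real.norm_eq_abs, mul_pow, sq_abs]
  field_simp
  ring

theorem norm_eq_of_gradInnerDivNormSq_eq {e x y : E} (he : e ≠ 0)
    (h : gradInnerDivNormSq e x = gradInnerDivNormSq e y) : ‖x‖ = ‖y‖ := by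
  have hnorm := congrArg norm h
  rw [norm_gradInnerDivNormSq, norm_gradInnerDivNormSq, div_eq_mul_inv, div_eq_mul_inv,
    mul_right_inj' (norm_ne_zero_iff.2 he), inv_inj] at hnorm
  exact (pow_left_inj₀ (norm_nonneg _) (norm_nonneg _) two_ne_zero).1 hnorm

theorem inner_smul_eq_of_gradInnerDivNormSq_eq {e x y : E} (hy : y ≠ 0) (hxy : ‖x‖ = ‖y‖)
    (h : gradInnerDivNormSq e x = gradInnerDivNormSq e y) : ⟪e, x⟫ • x = ⟪e, y⟫ • y := by
  have hy4 : 2 / ‖y‖ ^ 4 ≠ 0 := by positivity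
  rw [gradInnerDivNormSq, gradInnerDivNormSq, hxy, sub_right_inj] at h
  refine smul_right_injective E hy4 ?_
  simp only [smul_smul]
  convert h using 2 <;> ring

variable [CompleteSpace E]

theorem hasGradientAt_inner_div_norm_sq_s3 (e : E) {x : E} (hx : x ≠ 0) :
    HasGradientAt (fun θ => ⟪e, θ⟫ / ‖θ‖ ^ 2) (gradInnerDivNormSq e x) x := by
  have hx2 : ‖x‖ ^ 2 ≠ 0 := by positivity
  have hinv := (hasDerivAt_inv hx2).comp_hasFDerivAt x (hasStrictFDerivAt_norm_sq x).hasFDerivAt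
  have h : HasFDerivAt (fun θ => ⟪e, θ⟫ * (‖θ‖ ^ 2)⁻¹) _ x := (innerSL ℝ e).hasFDerivAt.mul hinv
  simp only [← div_eq_mul_inv] at h
  refine hasGradientAt_iff_hasFDerivAt.2 (h.congr_fderiv ?_)
  ext v
  simp [gradInnerDivNormSq]
  field_simp
  ring

theorem hasGradientAt_neg_inner_div_norm_sq_sub_sub (e ξ : E) {η : E} (hη : η ≠ 0)
    (hξη : ξ - η ≠ 0) :
    HasGradientAt (fun θ => -(⟪e, ξ - θ⟫ / ‖ξ - θ‖ ^ 2) - ⟪e, θ⟫ / ‖θ‖ ^ 2)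
      (gradInnerDivNormSq e (ξ - η) - gradInnerDivNormSq e η) η := by
  have hsub : HasFDerivAt (fun θ : E => ξ - θ) (-ContinuousLinearMap.id ℝ E) η :=
    (hasFDerivAt_id η).const_sub ξ
  have h := (((hasGradientAt_inner_div_norm_sq_s3 e hξη).hasFDerivAt.comp η hsub).neg).sub
    (hasGradientAt_inner_div_norm_sq_s3 e hη).hasFDerivAt
  refine hasGradientAt_iff_hasFDerivAt.2 (h.congr_fderiv ?_)
  ext v
  simp

end

-- The hypotheses are the real and imaginary parts of `z² = w²`, where `z = x 0 + i x 1`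
-- and `w = y 0 + i y 1`.
theorem EuclideanSpace.eq_or_eq_neg_of_sq_sub_sq_eq_of_mul_eq {x y : EuclideanSpace ℝ (Fin 2)}
    (h₁ : x 0 ^ 2 - x 1 ^ 2 = y 0 ^ 2 - y 1 ^ 2) (h₂ : x 0 * x 1 = y 0 * y 1) :
    x = y ∨ x = -y := by
  have hsq : (⟨x 0, x 1⟩ : ℂ) ^ 2 = ⟨y 0, y 1⟩ ^ 2 := by
    apply Complex.ext <;> simp [sq] <;> linarith
  rcases sq_eq_sq_iff_eq_or_eq_neg.1 hsq with h | h <;> [left; right] <;>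
    ext i <;> fin_cases i <;> simp_all [Complex.ext_iff]

theorem gradInnerDivNormSq_single_zero_eq_iff {x y : EuclideanSpace ℝ (Fin 2)} (hy : y ≠ 0) :
    gradInnerDivNormSq (EuclideanSpace.single 0 1) x =
        gradInnerDivNormSq (EuclideanSpace.single 0 1) y ↔ x = y ∨ x = -y := by
  refine ⟨fun h => ?_, by rintro (rfl | rfl) <;> simp only [gradInnerDivNormSq_neg]⟩
  have hnorm := norm_eq_of_gradInnerDivNormSq_eq (by simp) h
  have hsmul := inner_smul_eq_of_gradInnerDivNormSq_eq hy hnorm h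
  have h₀ : x 0 * x 0 = y 0 * y 0 := by
    simpa [EuclideanSpace.inner_single_left] using congrArg (· 0) hsmul
  have h₁ : x 0 * x 1 = y 0 * y 1 := by
    simpa [EuclideanSpace.inner_single_left] using congrArg (· 1) hsmul
  have hsq : ‖x‖ ^ 2 = ‖y‖ ^ 2 := by rw [hnorm]
  rw [EuclideanSpace.real_norm_sq_eq, EuclideanSpace.real_norm_sq_eq, Fin.sum_univ_two,
    Fin.sum_univ_two] at hsq
  exact EuclideanSpace.eq_or_eq_neg_of_sq_sub_sq_eq_of_mul_eq (by linarith) h₁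

theorem space_resonant_set (ξ η : EuclideanSpace ℝ (Fin 2))
    (hη : η ≠ 0) (hξη : ξ - η ≠ 0) :
    gradient
        (fun θ : EuclideanSpace ℝ (Fin 2) =>
          -((ξ 0 - θ 0) / ‖ξ - θ‖ ^ 2) - θ 0 / ‖θ‖ ^ 2) η = 0 ↔
      ξ = 0 ∨ ξ = (2 : ℝ) • η := by
  have hΦ := hasGradientAt_neg_inner_div_norm_sq_sub_sub (EuclideanSpace.single 0 1) ξ hη hξη
  simp only [EuclideanSpace.inner_single_left, map_one, one_mul, PiLp.sub_apply] at hΦ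
  rw [hΦ.gradient, sub_eq_zero, gradInnerDivNormSq_single_zero_eq_iff hη, sub_eq_iff_eq_add,
    ← two_smul ℝ, sub_eq_neg_self, or_comm]
end
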